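/- There exists a unique basis {H̱_w : w ∈ W} of the Hecke algebra H as a Z[v,v⁻¹]-module satisfying d(H̱_w) = H̱_w and H̱_w = H_w + Σ_{x < w} h_{x,w} H_x, where each h_{x,w} lies in vZ[v] and < is the Bruhat order on W. -/

import Mathlib

open LaurentPolynomial

/-- The Bruhat order on a Coxeter group, defined via the subword property:
`x ≤ w` iff some reduced word for `w` contains a reduced word for `x` as a
(not necessarily contiguous) subword. -/
def CoxeterSystem.bruhatLE {B W : Type} [Group W] {M : CoxeterMatrix B}
    (cs : CoxeterSystem M W) (x w : W) : Prop :=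
  ∃ ω : List B, cs.IsReduced ω ∧ cs.wordProd ω = w ∧
    ∃ φ : List B, φ.Sublist ω ∧ cs.IsReduced φ ∧ cs.wordProd φ = x

/-- The strict Bruhat order. -/
def CoxeterSystem.bruhatLT {B W : Type} [Group W] {M : CoxeterMatrix B}
    (cs : CoxeterSystem M W) (x w : W) : Prop :=
  cs.bruhatLE x w ∧ x ≠ w

/-!
Existence is by induction on length: for `w = s u > u`, the element `(H_s + v) H̱_u` is bar
invariant and equals `H_w` plus lower terms with coefficients in `ℤ[v]`; subtracting integer
multiples of the lower `H̱_z` removes their constant terms. Uniqueness holds because `d` is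
unitriangular on the standard basis: the top coefficient `p` of a bar-invariant element satisfies
`p(v⁻¹) = p(v)`, which is impossible for `0 ≠ p ∈ vℤ[v]`.

The lower terms are controlled by the Bruhat order taken as chains `x < x t` of reflections.
Its lifting property `x ≤ u < s u → s x ≤ s u` and its comparison with the subword order both
rest on the strong exchange condition, which comes from the sign `(-1)^(number of occurrences of
t)` in the inversion sequence of a word being a well-defined cocycle on `W`.
-/

namespace CoxeterSystem

open scoped Classical

variable {B W : Type*} [Group W] {M : CoxeterMatrix B} (cs : CoxeterSystem M W)

local prefix:100 "s" => cs.simple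
local prefix:100 "π" => cs.wordProd
local prefix:100 "ℓ" => cs.length
local prefix:100 "ris" => cs.rightInvSeq

noncomputable def reflSignAct (i : B) : Function.End (W × ℤˣ) :=
  fun p => (s i * p.1 * s i, if p.1 = s i then -p.2 else p.2)

theorem prod_map_reflSignAct_apply (ω : List B) (t : W) (ε : ℤˣ) :
    (ω.map cs.reflSignAct).prod (t, ε) =
      (π ω * t * (π ω)⁻¹, (-1) ^ (ris ω).count t * ε) := by
  induction ω with
  | nil => simp [Function.End.one_def]
  | cons i ω ih =>
    change cs.reflSignAct i ((ω.map cs.reflSignAct).prod (t, ε)) = _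
    rw [ih]
    simp only [reflSignAct, rightInvSeq, wordProd_cons, mul_inv_rev, inv_simple, List.count_cons]
    refine Prod.ext (by group) ?_
    have : π ω * t * (π ω)⁻¹ = s i ↔ (π ω)⁻¹ * s i * π ω = t := by
      constructor <;> intro h <;> rw [← h] <;> group
    by_cases h : (π ω)⁻¹ * s i * π ω = t <;> simp [this, h, pow_succ]

theorem simple_mul_pow_eq_inv_mul (i j : B) (k : ℕ) :
    s j * (s i * s j) ^ k = ((s i * s j) ^ k)⁻¹ * s j := by
  have h : s j * (s i * s j) * (s j)⁻¹ = (s i * s j)⁻¹ := by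
    simp [mul_assoc]
  rw [← mul_inv_eq_iff_eq_mul, ← inv_pow, ← h, conj_pow]

def pairWord (i j : B) (k : ℕ) : List B := (List.replicate k [i, j]).flatten

theorem prod_map_pairWord {N : Type*} [Monoid N] (f : B → N) (i j : B) (k : ℕ) :
    ((pairWord i j k).map f).prod = (f i * f j) ^ k := by
  simp [pairWord, List.map_flatten, List.prod_flatten]

theorem rightInvSeq_pairWord (i j : B) (k : ℕ) :
    ris (pairWord i j k) =
      ((List.range (2 * k)).map fun l => ((s i * s j) ^ l)⁻¹ * s j).reverse := by
  induction k with
  | zero => simp [pairWord]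
  | succ k ih =>
    have hπ : π (pairWord i j k) = (s i * s j) ^ k := prod_map_pairWord _ i j k
    have hj := simple_mul_pow_eq_inv_mul cs i j
    change ris (i :: j :: pairWord i j k) = _
    rw [show 2 * (k + 1) = 2 * k + 1 + 1 by ring]
    simp only [rightInvSeq, ih, wordProd_cons, hπ, List.range_succ, List.map_append,
      List.reverse_append, List.map_cons, List.map_nil, List.reverse_cons, List.reverse_nil,
      List.nil_append, List.cons_append, List.cons.injEq, and_true]
    constructor
    · calc (s j * (s i * s j) ^ k)⁻¹ * s i * (s j * (s i * s j) ^ k)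
          = (s j * (s i * s j) ^ k)⁻¹ * (s i * s j) ^ (k + 1) := by
            simp only [pow_succ', mul_assoc]
        _ = _ := by
          rw [hj, mul_inv_rev, inv_simple, inv_inv, mul_assoc, ← pow_add, hj]
          generalize s i * s j = c
          group
    · rw [mul_assoc, hj]
      generalize s i * s j = c
      group

theorem isLiftable_reflSignAct : M.IsLiftable cs.reflSignAct := by
  intro i j
  set c := s i * s j
  have hc : c ^ M i j = 1 := cs.simple_mul_simple_pow i j
  -- the inversion sequence of `(i j)^(M i j)` is periodic with period `M i j`
  have hcount (t : W) : Even ((ris (pairWord i j (M i j))).count t) := by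
    rw [rightInvSeq_pairWord, List.count_reverse, two_mul, List.range_add, List.map_append,
      List.map_map, List.count_append]
    have hperiod :
        (fun l => (c ^ l)⁻¹ * s j) ∘ (M i j + ·) = fun l => (c ^ l)⁻¹ * s j := by
      funext l
      simp [pow_add, hc]
    rw [hperiod]
    exact ⟨_, rfl⟩
  have hπ : π (pairWord i j (M i j)) = 1 := (prod_map_pairWord _ i j _).trans hc
  funext ⟨t, ε⟩
  rw [← prod_map_pairWord, prod_map_reflSignAct_apply, hπ, (hcount t).neg_one_pow]
  simp [Function.End.one_def]

noncomputable def reflSignRep : W →* Function.End (W × ℤˣ) :=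
  cs.lift ⟨cs.reflSignAct, cs.isLiftable_reflSignAct⟩

theorem reflSignRep_wordProd (ω : List B) :
    cs.reflSignRep (π ω) = (ω.map cs.reflSignAct).prod := by
  rw [wordProd, map_list_prod, List.map_map]
  congr 2
  funext i
  exact cs.lift_apply_simple cs.isLiftable_reflSignAct i

/-- `reflSign w t = (-1) ^ n`, where `n` counts the occurrences of `t` in the right inversion
sequence of any word for `w`. -/
noncomputable def reflSign (w t : W) : ℤˣ := (cs.reflSignRep w (t, 1)).2

theorem reflSign_wordProd (ω : List B) (t : W) :
    cs.reflSign (π ω) t = (-1) ^ (ris ω).count t := by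
  simp [reflSign, reflSignRep_wordProd, prod_map_reflSignAct_apply]

theorem reflSignRep_apply (w t : W) (ε : ℤˣ) :
    cs.reflSignRep w (t, ε) = (w * t * w⁻¹, cs.reflSign w t * ε) := by
  obtain ⟨ω, -, rfl⟩ := cs.exists_isReduced w
  simp [reflSign, reflSignRep_wordProd, prod_map_reflSignAct_apply]

theorem reflSign_mul (v w t : W) :
    cs.reflSign (v * w) t = cs.reflSign v (w * t * w⁻¹) * cs.reflSign w t := by
  have h : cs.reflSignRep (v * w) (t, 1) = cs.reflSignRep v (cs.reflSignRep w (t, 1)) := by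
    rw [map_mul]; rfl
  rw [reflSignRep_apply, reflSignRep_apply, reflSignRep_apply, mul_one] at h
  simpa using (Prod.ext_iff.mp h).2

theorem reflSign_one (t : W) : cs.reflSign 1 t = 1 := by
  simpa using cs.reflSign_wordProd [] t

theorem reflSign_simple_self (i : B) : cs.reflSign (s i) (s i) = -1 := by
  simpa [rightInvSeq] using cs.reflSign_wordProd [i] (s i)

theorem reflSign_conj_mul_reflSign_inv (g t : W) :
    cs.reflSign g (g⁻¹ * t * g) * cs.reflSign g⁻¹ t = 1 := by
  simpa [reflSign_one] using (cs.reflSign_mul g g⁻¹ t).symm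

variable {cs} in
theorem IsReflection.reflSign_self {t : W} (ht : cs.IsReflection t) : cs.reflSign t t = -1 := by
  obtain ⟨g, i, rfl⟩ := ht
  have hconj : g⁻¹ * (g * s i * g⁻¹) * g = s i := by group
  rw [reflSign_mul, reflSign_mul, inv_inv, hconj, show s i * s i * (s i)⁻¹ = s i by group,
    reflSign_simple_self, mul_neg_one, neg_mul, ← cs.reflSign_conj_mul_reflSign_inv g, hconj]

variable {cs} in
theorem IsReduced.reflSign_wordProd {ω : List B} (hω : cs.IsReduced ω) (t : W) :
    cs.reflSign (π ω) t = if t ∈ ris ω then -1 else 1 := by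
  rw [CoxeterSystem.reflSign_wordProd]
  split_ifs with h
  · rw [List.count_eq_one_of_mem hω.nodup_rightInvSeq h, pow_one]
  · rw [List.count_eq_zero_of_not_mem h, pow_zero]

variable {cs} in
/-- The strong exchange condition. -/
theorem IsReduced.mem_rightInvSeq {ω : List B} (hω : cs.IsReduced ω) {t : W}
    (ht : cs.IsReflection t) (hlt : ℓ (π ω * t) < ℓ (π ω)) : t ∈ ris ω := by
  obtain ⟨β, hβ, hβω⟩ := cs.exists_isReduced (π ω * t)
  have hβt : t ∉ ris β := fun hmem => by
    have := (cs.isRightInversion_of_mem_rightInvSeq hβ hmem).2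
    rw [← hβω, mul_assoc, ht.mul_self, mul_one] at this
    omega
  have hsign := cs.reflSign_mul (π ω) t t
  rw [hβω, hβ.reflSign_wordProd, if_neg hβt, hω.reflSign_wordProd, ht.reflSign_self,
    mul_inv_cancel_right] at hsign
  by_contra hωt
  rw [if_neg hωt] at hsign
  exact absurd hsign (by decide)

variable {cs} in
theorem IsReduced.exists_sublist_wordProd_eq_mul {ω : List B} (hω : cs.IsReduced ω) {t : W}
    (ht : cs.IsReflection t) (hlt : ℓ (π ω * t) < ℓ (π ω)) :
    ∃ γ, γ.Sublist ω ∧ γ.length + 1 = ω.length ∧ π γ = π ω * t := by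
  obtain ⟨j, hj, rfl⟩ := List.mem_iff_getElem.mp (hω.mem_rightInvSeq ht hlt)
  rw [length_rightInvSeq] at hj
  refine ⟨ω.eraseIdx j, List.eraseIdx_sublist ω j, List.length_eraseIdx_add_one hj, ?_⟩
  rw [← wordProd_mul_getD_rightInvSeq, List.getD_eq_getElem]

variable {cs} in
theorem IsReduced.exists_sublist_wordProd_eq_simple_mul {ω : List B} (hω : cs.IsReduced ω)
    {i : B} (hlt : ℓ (s i * π ω) < ℓ (π ω)) :
    ∃ γ, γ.Sublist ω ∧ γ.length + 1 = ω.length ∧ π γ = s i * π ω := by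
  have ht : cs.IsReflection ((π ω)⁻¹ * s i * π ω) := ⟨(π ω)⁻¹, i, by group⟩
  have hconj : π ω * ((π ω)⁻¹ * s i * π ω) = s i * π ω := by group
  rw [← hconj] at hlt ⊢
  exact hω.exists_sublist_wordProd_eq_mul ht hlt

/-- The deletion property. -/
theorem exists_isReduced_sublist (ω : List B) :
    ∃ φ, φ.Sublist ω ∧ cs.IsReduced φ ∧ π φ = π ω := by
  induction ω with
  | nil => exact ⟨[], List.Sublist.refl _, by simp [IsReduced], rfl⟩
  | cons i α ih =>
    obtain ⟨φ, hφα, hφ, hπφ⟩ := ih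
    have hφlen : ℓ (π φ) = φ.length := hφ
    rw [wordProd_cons, ← hπφ]
    rcases cs.length_simple_mul (π φ) i with hup | hdown
    · refine ⟨i :: φ, hφα.cons_cons i, ?_, wordProd_cons ..⟩
      simp [IsReduced, wordProd_cons, hup, hφlen]
    · obtain ⟨γ, hγφ, hγlen, hπγ⟩ :=
        hφ.exists_sublist_wordProd_eq_simple_mul (i := i) (by omega)
      refine ⟨γ, hγφ.trans (hφα.trans (List.sublist_cons_self i α)), ?_, hπγ⟩
      simp only [IsReduced, hπγ]
      omega

theorem exists_length_simple_mul_eq_succ {w : W} (hw : w ≠ 1) :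
    ∃ i u, s i * u = w ∧ ℓ (s i * u) = ℓ u + 1 := by
  obtain ⟨i, hi⟩ := cs.exists_leftDescent_of_ne_one hw
  refine ⟨i, s i * w, simple_mul_simple_cancel_left .., ?_⟩
  have := cs.length_simple_mul w i
  simp only [IsLeftDescent] at hi
  simp only [simple_mul_simple_cancel_left]
  omega

def bruhatStep (x y : W) : Prop := ∃ t, cs.IsReflection t ∧ x * t = y ∧ ℓ x < ℓ y

/-- The Bruhat order, defined through chains of reflections. -/
def chainLE : W → W → Prop := Relation.ReflTransGen cs.bruhatStep

variable {cs}

theorem chainLE.length_le {x w : W} (h : cs.chainLE x w) : ℓ x ≤ ℓ w := by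
  induction h with
  | refl => exact le_rfl
  | tail _ step ih => obtain ⟨t, -, -, hlt⟩ := step; omega

theorem chainLE.length_lt {x w : W} (h : cs.chainLE x w) (hne : x ≠ w) : ℓ x < ℓ w := by
  induction h with
  | refl => exact absurd rfl hne
  | tail hxy step => obtain ⟨t, -, -, hlt⟩ := step; have := chainLE.length_le hxy; omega

theorem bruhatStep_simple_mul {u : W} {i : B} (h : ℓ u < ℓ (s i * u)) :
    cs.bruhatStep u (s i * u) :=
  ⟨u⁻¹ * s i * u, ⟨u⁻¹, i, by group⟩, by group, h⟩

theorem bruhatStep.simple_mul {x y : W} (h : cs.bruhatStep x y) (i : B) :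
    cs.chainLE (s i * x) (s i * y) ∨ s i * x = y := by
  obtain ⟨t, ht, rfl, hlt⟩ := h
  have hxt : s i * x * t = s i * (x * t) := mul_assoc ..
  rcases lt_or_gt_of_ne (ht.length_mul_left_ne (s i * x)).symm with hup | hdown
  · exact .inl (.single ⟨t, ht, hxt, by rwa [hxt] at hup⟩)
  right
  -- `s i` is a left descent of `x * t` but not of `x`, so strong exchange on a reduced word
  -- `i :: β` for `x * t` must delete the leading `i`.
  rw [hxt] at hdown
  have hy : ℓ (s i * (x * t)) + 1 = ℓ (x * t) := by
    rcases cs.length_simple_mul x i with h | h <;>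
    rcases cs.length_simple_mul (x * t) i with h' | h' <;> omega
  obtain ⟨β, hβ, hβy⟩ := cs.exists_isReduced (s i * (x * t))
  have hπ : π (i :: β) = x * t := by rw [wordProd_cons, ← hβy, simple_mul_simple_cancel_left]
  have hiβ : cs.IsReduced (i :: β) := by
    simp only [IsReduced, hπ, List.length_cons, ← hβ.eq, ← hβy]
    omega
  obtain ⟨γ, hγ, hγlen, hπγ⟩ :=
    hiβ.exists_sublist_wordProd_eq_mul ht (by rw [hπ, mul_assoc, ht.mul_self, mul_one]; omega)
  rw [hπ, mul_assoc, ht.mul_self, mul_one] at hπγ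
  cases hγ with
  | cons _ hγβ =>
    have hx : x = s i * (x * t) := by
      rw [hβy, ← hγβ.eq_of_length (by simpa using hγlen), hπγ]
    conv_lhs => rw [hx, simple_mul_simple_cancel_left]
  | cons_cons _ hγβ =>
    rename_i γ'
    have hx : s i * x = π γ' := by rw [← hπγ, wordProd_cons, simple_mul_simple_cancel_left]
    have := cs.length_wordProd_le γ'
    have := hβ.eq
    simp only [List.length_cons] at hγlen
    rw [hx, hβy] at hdown
    omega

theorem chainLE.simple_mul {x u : W} (h : cs.chainLE x u) {i : B} (hu : ℓ u < ℓ (s i * u)) :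
    cs.chainLE (s i * x) (s i * u) := by
  induction h using Relation.ReflTransGen.head_induction_on with
  | refl => exact .refl
  | head hxy hyu ih =>
    rcases hxy.simple_mul i with hstep | heq
    · exact hstep.trans ih
    · rw [heq]
      exact hyu.tail (bruhatStep_simple_mul hu)

theorem chainLE.exists_isReduced_sublist {x w : W} (h : cs.chainLE x w) {ω : List B}
    (hω : cs.IsReduced ω) (hπ : π ω = w) :
    ∃ φ, φ.Sublist ω ∧ cs.IsReduced φ ∧ π φ = x := by
  induction h using Relation.ReflTransGen.head_induction_on with
  | refl => exact ⟨ω, List.Sublist.refl ω, hω, hπ⟩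
  | @head y _ hxy _ ih =>
    obtain ⟨ψ, hψω, hψ, rfl⟩ := ih
    obtain ⟨t, ht, hxt, hlt⟩ := hxy
    have hx : π ψ * t = y := by rw [← hxt, mul_assoc, ht.mul_self, mul_one]
    obtain ⟨γ, hγψ, -, hπγ⟩ := hψ.exists_sublist_wordProd_eq_mul ht (by rwa [hx])
    obtain ⟨φ, hφγ, hφ, hπφ⟩ := cs.exists_isReduced_sublist γ
    exact ⟨φ, (hφγ.trans hγψ).trans hψω, hφ, by rw [hπφ, hπγ, hx]⟩

end CoxeterSystem

theorem CoxeterSystem.chainLE.bruhatLE {B W : Type} [Group W] {M : CoxeterMatrix B}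
    {cs : CoxeterSystem M W} {x w : W} (h : cs.chainLE x w) : cs.bruhatLE x w := by
  obtain ⟨ω, hω, rfl⟩ := cs.exists_isReduced w
  exact ⟨ω, hω, rfl, h.exists_isReduced_sublist hω rfl⟩

namespace LaurentPolynomial

theorem coeff_T_mul {R : Type*} [CommSemiring R] (n m : ℤ) (p : R[T;T⁻¹]) :
    (T n * p).coeff m = p.coeff (m - n) := by
  rw [T, AddMonoidAlgebra.coeff_single_mul_apply, one_mul, neg_add_eq_sub]

theorem coeff_one {R : Type*} [CommSemiring R] (n : ℤ) :
    (1 : R[T;T⁻¹]).coeff n = if n = 0 then 1 else 0 := by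
  rw [← map_one C, C_apply]

theorem eq_zero_of_invert_eq_self {R : Type*} [CommSemiring R] {p : R[T;T⁻¹]}
    (hp : ∀ n ≤ 0, p.coeff n = 0) (h : invert p = p) : p = 0 := by
  ext n
  rcases le_or_gt n 0 with hn | hn
  · exact hp n hn
  · rw [← h, invert_apply]
    exact hp (-n) (by omega)

end LaurentPolynomial

namespace Module.Basis

variable {ι R M : Type*} [CommRing R] [AddCommGroup M] [Module R M]

def IsUnitriangularAt (b : Basis ι R M) (f : ι → ℕ) (i : ι) (x : M) : Prop :=
  b.repr x i = 1 ∧ ∀ j, b.repr x j ≠ 0 → j = i ∨ f j < f i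

variable {b : Basis ι R M} {f : ι → ℕ} {v : ι → M}

theorem repr_linearCombination_of_isUnitriangularAt {x : ι →₀ R} {i : ι}
    (hv : ∀ j, b.IsUnitriangularAt f j (v j)) (hx : i ∈ x.support)
    (hmax : ∀ j ∈ x.support, f j ≤ f i) :
    b.repr (Finsupp.linearCombination R v x) i = x i := by
  rw [Finsupp.linearCombination_apply, map_finsuppSum, Finsupp.sum_apply, Finsupp.sum,
    Finset.sum_eq_single i]
  · simp [(hv i).1]
  · intro j hj hji
    have : b.repr (v j) i = 0 := by
      by_contra hne
      rcases (hv j).2 i hne with h | h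
      · exact hji h.symm
      · exact absurd (hmax j hj) (by omega)
    simp [this]
  · intro h; exact absurd hx h

theorem linearIndependent_of_isUnitriangularAt (hv : ∀ i, b.IsUnitriangularAt f i (v i)) :
    LinearIndependent R v := by
  rw [linearIndependent_iff]
  intro x hx
  by_contra hne
  obtain ⟨i, hi, hmax⟩ :=
    Finset.exists_max_image x.support f (Finsupp.support_nonempty_iff.mpr hne)
  have := repr_linearCombination_of_isUnitriangularAt hv hi hmax
  rw [hx, map_zero, Finsupp.zero_apply] at this
  exact Finsupp.mem_support_iff.mp hi this.symm

theorem mem_span_of_isUnitriangularAt (hv : ∀ i, b.IsUnitriangularAt f i (v i)) (i : ι) :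
    b i ∈ Submodule.span R (Set.range v) := by
  induction hn : f i using Nat.strong_induction_on generalizing i with
  | _ n ih =>
  classical
  set s := insert i (b.repr (v i)).support
  have hv_eq : v i = b i + ∑ j ∈ s.erase i, b.repr (v i) j • b j := by
    conv_lhs => rw [← b.linearCombination_repr (v i), Finsupp.linearCombination_apply,
      Finsupp.sum_of_support_subset _ (Finset.subset_insert i _) _ (fun j _ => zero_smul R (b j)),
      ← Finset.add_sum_erase _ _ (Finset.mem_insert_self i _)]
    rw [(hv i).1, one_smul]
  rw [eq_sub_of_add_eq hv_eq.symm]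
  refine Submodule.sub_mem _ (Submodule.subset_span ⟨i, rfl⟩)
    (Submodule.sum_mem _ fun j hj => ?_)
  obtain ⟨hji, hj⟩ := Finset.mem_erase.mp hj
  by_cases hc : b.repr (v i) j = 0
  · simp [hc]
  have hlt := ((hv i).2 j hc).resolve_left hji
  exact Submodule.smul_mem _ _ (ih _ (hn ▸ hlt) j rfl)

theorem exists_basis_of_isUnitriangularAt (hv : ∀ i, b.IsUnitriangularAt f i (v i)) :
    ∃ b' : Basis ι R M, ∀ i, b' i = v i := by
  refine ⟨.mk (linearIndependent_of_isUnitriangularAt hv) ?_, fun i => Basis.mk_apply ..⟩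
  rw [← b.span_eq, Submodule.span_le]
  rintro _ ⟨i, rfl⟩
  exact mem_span_of_isUnitriangularAt hv i

end Module.Basis

section HeckeAlgebra

open scoped Classical

open CoxeterSystem

variable {B W : Type*} [Group W] {M : CoxeterMatrix B} (cs : CoxeterSystem M W)
  {H : Type*} [Ring H] [Algebra ℤ[T;T⁻¹] H]

local prefix:100 "s" => cs.simple
local prefix:100 "ℓ" => cs.length

structure IsHeckeBasis (Hb : Module.Basis W ℤ[T;T⁻¹] H) : Prop where
  one : Hb 1 = 1
  simple_mul_of_lt : ∀ i u, ℓ (s i * u) = ℓ u + 1 → Hb (s i) * Hb u = Hb (s i * u)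
  simple_mul_of_gt : ∀ i u, ℓ (s i * u) + 1 = ℓ u →
    Hb (s i) * Hb u = Hb (s i * u) + (T (-1) - T 1 : ℤ[T;T⁻¹]) • Hb u

structure IsBarInvolution (Hb : Module.Basis W ℤ[T;T⁻¹] H) (d : H →+* H) : Prop where
  map_smul : ∀ (p : ℤ[T;T⁻¹]) a, d (p • a) = invert p • d a
  mul_basis_inv : ∀ u, d (Hb u) * Hb u⁻¹ = 1

variable {cs} {Hb : Module.Basis W ℤ[T;T⁻¹] H} {d : H →+* H}

namespace IsHeckeBasis

theorem repr_simple_mul (hH : IsHeckeBasis cs Hb) (i : B) (E : H) (z : W) :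
    Hb.repr (Hb (s i) * E) z = Hb.repr E (s i * z) +
      if ℓ (s i * z) < ℓ z then (T (-1) - T 1) * Hb.repr E z else 0 := by
  suffices hlin : (Hb.coord z).comp (LinearMap.mulLeft ℤ[T;T⁻¹] (Hb (s i))) =
      Hb.coord (s i * z) +
        (if ℓ (s i * z) < ℓ z then (T (-1) - T 1 : ℤ[T;T⁻¹]) else 0) • Hb.coord z by
    have := LinearMap.congr_fun hlin E
    simp only [LinearMap.comp_apply, LinearMap.mulLeft_apply, LinearMap.add_apply,
      LinearMap.smul_apply, Module.Basis.coord_apply] at this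
    rw [this, smul_eq_mul]
    split_ifs <;> simp
  refine Hb.ext fun x => ?_
  have hsz : s i * x = z ↔ x = s i * z := by
    constructor <;> rintro rfl <;> simp
  simp only [LinearMap.comp_apply, LinearMap.mulLeft_apply, LinearMap.add_apply,
    LinearMap.smul_apply, Module.Basis.coord_apply, Module.Basis.repr_self, smul_eq_mul]
  rcases cs.length_simple_mul x i with hup | hdown
  · rw [hH.simple_mul_of_lt i x hup]
    by_cases hxz : x = z
    · subst hxz
      have : s i * x ≠ x := fun h => by simp [h] at hup
      simp [this, hup]
    · simp [Finsupp.single_apply, hsz, hxz]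
  · rw [hH.simple_mul_of_gt i x hdown]
    by_cases hxz : x = z
    · subst hxz
      have : s i * x ≠ x := fun h => by simp [h] at hdown
      simp [this, show ℓ (s i * x) < ℓ x by omega]
    · simp [Finsupp.single_apply, hsz, hxz]

theorem repr_simple_mul_add_smul (hH : IsHeckeBasis cs Hb) (i : B) (p : ℤ[T;T⁻¹]) (E : H)
    (z : W) : Hb.repr (Hb (s i) * E + p • E) z = Hb.repr E (s i * z) +
      ((if ℓ (s i * z) < ℓ z then T (-1) - T 1 else 0) + p) * Hb.repr E z := by
  rw [map_add, map_smul, Finsupp.add_apply, Finsupp.smul_apply, smul_eq_mul,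
    hH.repr_simple_mul, add_mul, ite_mul, zero_mul, add_assoc]

theorem repr_ne_zero_of_simple_mul_add_smul (hH : IsHeckeBasis cs Hb) {i : B} {p : ℤ[T;T⁻¹]}
    {E : H} {z : W} (h : Hb.repr (Hb (s i) * E + p • E) z ≠ 0) :
    Hb.repr E (s i * z) ≠ 0 ∨ Hb.repr E z ≠ 0 := by
  rw [hH.repr_simple_mul_add_smul] at h
  by_contra! h'
  simp [h'] at h

end IsHeckeBasis

namespace IsBarInvolution

theorem repr_map (hd : IsBarInvolution Hb d) (E : H) (z : W) :
    Hb.repr (d E) z = (Hb.repr E).sum fun x p => invert p * Hb.repr (d (Hb x)) z := by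
  conv_lhs => rw [← Hb.linearCombination_repr E, Finsupp.linearCombination_apply]
  simp [map_finsuppSum, hd.map_smul, Finsupp.sum_apply]

theorem map_simple (hH : IsHeckeBasis cs Hb) (hd : IsBarInvolution Hb d) (i : B) :
    d (Hb (s i)) = Hb (s i) + (T 1 - T (-1) : ℤ[T;T⁻¹]) • 1 := by
  have hsq : Hb (s i) * Hb (s i) = 1 + (T (-1) - T 1 : ℤ[T;T⁻¹]) • Hb (s i) := by
    simpa [hH.one] using hH.simple_mul_of_gt i (s i) (by simp)
  have hinv : Hb (s i) * (Hb (s i) + (T 1 - T (-1) : ℤ[T;T⁻¹]) • 1) = 1 := by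
    rw [mul_add, hsq, mul_smul_comm, mul_one, add_assoc, ← add_smul, sub_add_sub_cancel',
      sub_self, zero_smul, add_zero]
  have hd_s : d (Hb (s i)) * Hb (s i) = 1 := by simpa using hd.mul_basis_inv (s i)
  calc d (Hb (s i))
      = d (Hb (s i)) * (Hb (s i) * (Hb (s i) + (T 1 - T (-1) : ℤ[T;T⁻¹]) • 1)) := by
        rw [hinv, mul_one]
    _ = _ := by rw [← mul_assoc, hd_s, one_mul]

theorem map_simple_add_T_one (hH : IsHeckeBasis cs Hb) (hd : IsBarInvolution Hb d) (i : B) :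
    d (Hb (s i) + (T 1 : ℤ[T;T⁻¹]) • 1) = Hb (s i) + (T 1 : ℤ[T;T⁻¹]) • 1 := by
  rw [map_add, hd.map_smul, map_one, hd.map_simple hH, invert_T, add_assoc, ← add_smul,
    sub_add_cancel]

theorem isUnitriangularAt_map_basis (hH : IsHeckeBasis cs Hb) (hd : IsBarInvolution Hb d)
    (w : W) : Hb.IsUnitriangularAt cs.length w (d (Hb w)) := by
  induction hn : ℓ w using Nat.strong_induction_on generalizing w with
  | _ n ih =>
  rcases eq_or_ne w 1 with rfl | hw
  · have h1 : d (Hb 1) = Hb 1 := by rw [hH.one, map_one]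
    refine ⟨by simp [h1], fun z hz => .inl ?_⟩
    by_contra hz1
    simp [h1, Ne.symm hz1] at hz
  obtain ⟨i, u, rfl, hu⟩ := cs.exists_length_simple_mul_eq_succ hw
  obtain ⟨hu_self, hu_lower⟩ := ih (ℓ u) (by omega) u rfl
  have hdw :
      d (Hb (s i * u)) = Hb (s i) * d (Hb u) + (T 1 - T (-1) : ℤ[T;T⁻¹]) • d (Hb u) := by
    rw [← hH.simple_mul_of_lt i u hu, map_mul, hd.map_simple hH, add_mul, smul_mul_assoc, one_mul]
  have hw_u : Hb.repr (d (Hb u)) (s i * u) = 0 := by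
    by_contra h
    rcases hu_lower _ h with h | h <;> [exact absurd hu (by simp [h]); omega]
  refine ⟨?_, fun z hz => ?_⟩
  · rw [hdw, hH.repr_simple_mul_add_smul, simple_mul_simple_cancel_left, hu_self, hw_u, mul_zero,
      add_zero]
  · rw [hdw] at hz
    have := cs.length_simple_mul z i
    rcases hH.repr_ne_zero_of_simple_mul_add_smul hz with h | h <;>
      rcases hu_lower _ h with h' | h'
    · left; rw [← h', simple_mul_simple_cancel_left]
    all_goals (right; subst_vars; omega)

theorem repr_map_of_length_le (hH : IsHeckeBasis cs Hb) (hd : IsBarInvolution Hb d) {E : H}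
    {z : W} (hmax : ∀ x, Hb.repr E x ≠ 0 → ℓ x ≤ ℓ z) :
    Hb.repr (d E) z = invert (Hb.repr E z) := by
  rw [hd.repr_map, Finsupp.sum_eq_single z]
  · rw [(hd.isUnitriangularAt_map_basis hH z).1, mul_one]
  · intro x hx hxz
    have : Hb.repr (d (Hb x)) z = 0 := by
      by_contra h
      rcases (hd.isUnitriangularAt_map_basis hH x).2 z h with h | h
      · exact hxz h.symm
      · exact absurd (hmax x hx) (by omega)
    rw [this, mul_zero]
  · simp

theorem eq_zero_of_map_eq_self (hH : IsHeckeBasis cs Hb) (hd : IsBarInvolution Hb d) {E : H}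
    (hE : d E = E) (hcoeff : ∀ z, ∀ n ≤ 0, (Hb.repr E z).coeff n = 0) : E = 0 := by
  by_contra hne
  obtain ⟨z, hz, hmax⟩ := Finset.exists_max_image (Hb.repr E).support cs.length
    (Finsupp.support_nonempty_iff.mpr (by simpa using hne))
  have htop := hd.repr_map_of_length_le hH (z := z) fun x hx => hmax x (by simpa using hx)
  rw [hE] at htop
  exact Finsupp.mem_support_iff.mp hz (eq_zero_of_invert_eq_self (hcoeff z) htop.symm)

end IsBarInvolution

variable (cs Hb d) in
structure IsKLElement (w : W) (C : H) : Prop where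
  map_eq : d C = C
  repr_self : Hb.repr C w = 1
  chainLE_of_repr_ne_zero : ∀ z, Hb.repr C z ≠ 0 → cs.chainLE z w
  coeff_eq_zero : ∀ z ≠ w, ∀ n ≤ 0, (Hb.repr C z).coeff n = 0

namespace IsKLElement

variable {w : W} {C : H}

theorem isUnitriangularAt (hC : IsKLElement cs Hb d w C) : Hb.IsUnitriangularAt cs.length w C :=
  ⟨hC.repr_self, fun z hz =>
    (eq_or_ne z w).imp_right (hC.chainLE_of_repr_ne_zero z hz).length_lt⟩

theorem coeff_repr_of_nonpos (hC : IsKLElement cs Hb d w C) (z : W) {n : ℤ} (hn : n ≤ 0) :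
    (Hb.repr C z).coeff n = if z = w ∧ n = 0 then 1 else 0 := by
  rcases eq_or_ne z w with rfl | hz
  · simp [hC.repr_self, coeff_one]
  · simp [hz, hC.coeff_eq_zero z hz n hn]

theorem repr_eq_zero_of_length_le (hC : IsKLElement cs Hb d w C) {z : W} (hz : z ≠ w)
    (hzw : ℓ w ≤ ℓ z) : Hb.repr C z = 0 := by
  by_contra h
  have := (hC.chainLE_of_repr_ne_zero z h).length_lt hz
  omega

end IsKLElement

/-- Since `H̱_z` has constant term `1` at `z` and none elsewhere, the subtracted sum removes
exactly the constant terms of the lower coefficients of `E`. -/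
theorem isKLElement_sub_sum {w : W} {E : H} {C : W → H} (hE : d E = E)
    (hEw : Hb.repr E w = 1) (hE_le : ∀ z, Hb.repr E z ≠ 0 → cs.chainLE z w)
    (hE_coeff : ∀ z ≠ w, ∀ n < 0, (Hb.repr E z).coeff n = 0)
    (hC : ∀ z, cs.chainLE z w → z ≠ w → IsKLElement cs Hb d z (C z)) :
    IsKLElement cs Hb d w
      (E - ∑ z ∈ (Hb.repr E).support.erase w, (Hb.repr E z).coeff 0 • C z) := by
  set S := (Hb.repr E).support.erase w
  have hS : ∀ z ∈ S, z ≠ w ∧ IsKLElement cs Hb d z (C z) := fun z hz => by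
    obtain ⟨hzw, hz⟩ := Finset.mem_erase.mp hz
    exact ⟨hzw, hC z (hE_le z (Finsupp.mem_support_iff.mp hz)) hzw⟩
  have hrepr (x : W) : Hb.repr (E - ∑ z ∈ S, (Hb.repr E z).coeff 0 • C z) x =
      Hb.repr E x - ∑ z ∈ S, (Hb.repr E z).coeff 0 • Hb.repr (C z) x := by
    simp only [map_sub, map_sum, map_zsmul, Finsupp.sub_apply, Finsupp.finsetSum_apply,
      Finsupp.smul_apply]
  refine ⟨?_, ?_, fun x hx => ?_, fun x hxw n hn => ?_⟩
  · simp only [map_sub, map_sum, map_zsmul, hE]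
    exact congrArg _ (Finset.sum_congr rfl fun z hz => by rw [(hS z hz).2.map_eq])
  · rw [hrepr, hEw, Finset.sum_eq_zero fun z hz => ?_, sub_zero]
    obtain ⟨hzw, hCz⟩ := hS z hz
    rw [hCz.repr_eq_zero_of_length_le hzw.symm
      ((hE_le z (Finsupp.mem_support_iff.mp (Finset.mem_of_mem_erase hz))).length_le), smul_zero]
  · rw [hrepr] at hx
    by_cases hEx : Hb.repr E x = 0
    · rw [hEx, zero_sub, neg_ne_zero] at hx
      obtain ⟨z, hz, hxz⟩ := Finset.exists_ne_zero_of_sum_ne_zero hx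
      exact ((hS z hz).2.chainLE_of_repr_ne_zero x (right_ne_zero_of_smul hxz)).trans
        (hE_le z (Finsupp.mem_support_iff.mp (Finset.mem_of_mem_erase hz)))
    · exact hE_le x hEx
  · have hsum : ∀ z ∈ S, ((Hb.repr E z).coeff 0 • Hb.repr (C z) x).coeff n =
        if x = z ∧ n = 0 then (Hb.repr E x).coeff 0 else 0 := fun z hz => by
      rw [AddMonoidAlgebra.coeff_smul_apply, (hS z hz).2.coeff_repr_of_nonpos x hn]
      split_ifs with h
      · simp [h.1]
      · simp
    rw [hrepr, AddMonoidAlgebra.coeff_sub, Finsupp.sub_apply, AddMonoidAlgebra.coeff_sum,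
      Finsupp.finsetSum_apply, Finset.sum_congr rfl hsum]
    rcases hn.lt_or_eq with hn | rfl
    · simp [hn.ne, hE_coeff x hxw n hn]
    · by_cases hx : x ∈ S
      · simp [Finset.sum_ite_eq, hx]
      · have : Hb.repr E x = 0 := by simpa [S, hxw] using hx
        simp [this]

theorem exists_isKLElement_simple_mul (hH : IsHeckeBasis cs Hb) (hd : IsBarInvolution Hb d)
    {i : B} {u : W} (hu : ℓ (s i * u) = ℓ u + 1)
    (hlower : ∀ z, ℓ z < ℓ (s i * u) → ∃ C, IsKLElement cs Hb d z C) :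
    ∃ C, IsKLElement cs Hb d (s i * u) C := by
  choose! C hC using hlower
  have hCu := hC u (by omega)
  set E := Hb (s i) * C u + (T 1 : ℤ[T;T⁻¹]) • C u
  have hrepr (z : W) : Hb.repr E z = Hb.repr (C u) (s i * z) +
      (if ℓ (s i * z) < ℓ z then T (-1) else T 1) * Hb.repr (C u) z := by
    rw [hH.repr_simple_mul_add_smul]
    split_ifs <;> ring
  refine ⟨_, isKLElement_sub_sum (E := E) ?_ ?_ ?_ ?_ fun z hz hzw => hC z (hz.length_lt hzw)⟩
  · have : E = (Hb (s i) + (T 1 : ℤ[T;T⁻¹]) • 1) * C u := by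
      rw [add_mul, smul_mul_assoc, one_mul]
    rw [this, map_mul, hd.map_simple_add_T_one hH, hCu.map_eq]
  · rw [hrepr, simple_mul_simple_cancel_left, hCu.repr_self,
      hCu.repr_eq_zero_of_length_le (fun h => by rw [h] at hu; omega) (by omega), mul_zero,
      add_zero]
  · intro z hz
    rcases hH.repr_ne_zero_of_simple_mul_add_smul hz with h | h
    · simpa using (hCu.chainLE_of_repr_ne_zero _ h).simple_mul (i := i) (by omega)
    · exact (hCu.chainLE_of_repr_ne_zero _ h).tail (bruhatStep_simple_mul (by omega))
  · intro z hzw n hn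
    have hsz : s i * z ≠ u := fun h => hzw (by rw [← h, simple_mul_simple_cancel_left])
    rw [hrepr, AddMonoidAlgebra.coeff_add, Finsupp.add_apply,
      hCu.coeff_eq_zero _ hsz n hn.le, zero_add]
    split_ifs with h <;> rw [coeff_T_mul, hCu.coeff_repr_of_nonpos z (by omega), if_neg] <;>
      rintro ⟨rfl, h'⟩ <;> omega

theorem exists_isKLElement (hH : IsHeckeBasis cs Hb) (hd : IsBarInvolution Hb d) (w : W) :
    ∃ C, IsKLElement cs Hb d w C := by
  induction hn : ℓ w using Nat.strong_induction_on generalizing w with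
  | _ n ih =>
  rcases eq_or_ne w 1 with rfl | hw
  · have h1 : Hb.repr 1 = Finsupp.single 1 1 := by rw [← hH.one, Hb.repr_self]
    refine ⟨1, map_one d, by simp [h1], fun z hz => ?_, fun z hz n _ => by simp [h1, hz]⟩
    rw [h1, Finsupp.single_apply_ne_zero] at hz
    rw [hz.1]
    exact .refl
  obtain ⟨i, u, rfl, hu⟩ := cs.exists_length_simple_mul_eq_succ hw
  exact exists_isKLElement_simple_mul hH hd hu fun z hz => ih _ (hn ▸ hz) z rfl

end HeckeAlgebra

theorem kazhdan_lusztig_basis_existence_and_uniqueness_general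
    {B W : Type} [Group W] {M : CoxeterMatrix B} (cs : CoxeterSystem M W)
    -- the Hecke algebra of (W,S), a ℤ[v,v⁻¹]-algebra
    (HH : Type) [Ring HH] [Algebra (LaurentPolynomial ℤ) HH]
    -- its standard basis {H_w : w ∈ W}
    (Hb : Module.Basis W (LaurentPolynomial ℤ) HH)
    (Hb_one : Hb 1 = 1)
    -- H_s H_u = H_{su} when l(su) = l(u) + 1  (so that H_w = H_{s₁} ⋯ H_{s_k}
    -- for any reduced expression w = s₁ ⋯ s_k)
    (Hb_mul : ∀ (i : B) (u : W), cs.length (cs.simple i * u) = cs.length u + 1 →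
      Hb (cs.simple i) * Hb u = Hb (cs.simple i * u))
    -- H_s H_u = H_{su} + (v⁻¹ - v) H_u when l(su) = l(u) - 1; together with the
    -- previous axiom this encodes the quadratic relations H_s² = (v⁻¹-v)H_s + 1
    (Hb_mul' : ∀ (i : B) (u : W), cs.length (cs.simple i * u) + 1 = cs.length u →
      Hb (cs.simple i) * Hb u
        = Hb (cs.simple i * u) + ((T (-1) - T 1 : LaurentPolynomial ℤ)) • Hb u)
    -- the bar involution d : H → H, a ring involution with d(v) = v⁻¹ ...
    (d : HH →+* HH)
    (d_semilinear : ∀ (p : LaurentPolynomial ℤ) (a : HH),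
      d (p • a) = (LaurentPolynomial.invert p) • d a)
    -- ... and d(H_w) = (H_{w⁻¹})⁻¹
    (d_H : ∀ u : W, d (Hb u) * Hb u⁻¹ = 1 ∧ Hb u⁻¹ * d (Hb u) = 1) :
    -- There exists a unique family {H̱_w} which is a ℤ[v,v⁻¹]-basis of H,
    -- is d-invariant, and satisfies H̱_w = H_w + Σ_{x<w} h_{x,w} H_x with
    -- h_{x,w} ∈ v ℤ[v].
    ∃! C : W → HH,
      (∃ b : Module.Basis W (LaurentPolynomial ℤ) HH, ∀ u : W, b u = C u) ∧
      (∀ u : W, d (C u) = C u) ∧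
      (∀ u : W, Hb.repr (C u) u = 1) ∧
      (∀ u x : W, x ≠ u → Hb.repr (C u) x ≠ 0 → cs.bruhatLT x u) ∧
      (∀ u x : W, x ≠ u → ∀ n : ℤ, n ≤ 0 → (Hb.repr (C u) x).coeff n = 0) := by
  have hH : IsHeckeBasis cs Hb := ⟨Hb_one, Hb_mul, Hb_mul'⟩
  have hd : IsBarInvolution Hb d := ⟨d_semilinear, fun u => (d_H u).1⟩
  choose C hC using exists_isKLElement hH hd
  refine ⟨C, ⟨Hb.exists_basis_of_isUnitriangularAt fun u => (hC u).isUnitriangularAt,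
    fun u => (hC u).map_eq, fun u => (hC u).repr_self,
    fun u x hxu hx => ⟨((hC u).chainLE_of_repr_ne_zero x hx).bruhatLE, hxu⟩,
    fun u => (hC u).coeff_eq_zero⟩, ?_⟩
  rintro C' ⟨-, hC'_map, hC'_self, -, hC'_coeff⟩
  funext u
  rw [← sub_eq_zero]
  refine hd.eq_zero_of_map_eq_self hH (by rw [map_sub, hC'_map, (hC u).map_eq]) fun x n hn => ?_
  rw [map_sub, Finsupp.sub_apply, AddMonoidAlgebra.coeff_sub, Finsupp.sub_apply]
  rcases eq_or_ne x u with rfl | hxu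
  · rw [hC'_self, (hC x).repr_self, sub_self]
  · rw [hC'_coeff u x hxu n hn, (hC u).coeff_eq_zero x hxu n hn, sub_self]

theorem kazhdan_lusztig_basis_existence_and_uniqueness
    {B W : Type} [Group W] {M : CoxeterMatrix B} (cs : CoxeterSystem M W)
    -- the Hecke algebra of (W,S), a ℤ[v,v⁻¹]-algebra
    (HH : Type) [Ring HH] [Algebra (LaurentPolynomial ℤ) HH]
    -- its standard basis {H_w : w ∈ W}
    (Hb : Module.Basis W (LaurentPolynomial ℤ) HH)
    (Hb_one : Hb 1 = 1)
    -- H_s H_u = H_{su} when l(su) = l(u) + 1  (so that H_w = H_{s₁} ⋯ H_{s_k}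
    -- for any reduced expression w = s₁ ⋯ s_k)
    (Hb_mul : ∀ (i : B) (u : W), cs.length (cs.simple i * u) = cs.length u + 1 →
      Hb (cs.simple i) * Hb u = Hb (cs.simple i * u))
    -- H_s H_u = H_{su} + (v⁻¹ - v) H_u when l(su) = l(u) - 1; together with the
    -- previous axiom this encodes the quadratic relations H_s² = (v⁻¹-v)H_s + 1
    (Hb_mul' : ∀ (i : B) (u : W), cs.length (cs.simple i * u) + 1 = cs.length u →
      Hb (cs.simple i) * Hb u
        = Hb (cs.simple i * u) + ((T (-1) - T 1 : LaurentPolynomial ℤ)) • Hb u)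
    -- the bar involution d : H → H, a ring involution with d(v) = v⁻¹ ...
    (d : HH →+* HH)
    (d_invol : Function.Involutive d)
    (d_semilinear : ∀ (p : LaurentPolynomial ℤ) (a : HH),
      d (p • a) = (LaurentPolynomial.invert p) • d a)
    -- ... and d(H_w) = (H_{w⁻¹})⁻¹
    (d_H : ∀ u : W, d (Hb u) * Hb u⁻¹ = 1 ∧ Hb u⁻¹ * d (Hb u) = 1) :
    -- There exists a unique family {H̱_w} which is a ℤ[v,v⁻¹]-basis of H,
    -- is d-invariant, and satisfies H̱_w = H_w + Σ_{x<w} h_{x,w} H_x with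
    -- h_{x,w} ∈ v ℤ[v].
    ∃! C : W → HH,
      (∃ b : Module.Basis W (LaurentPolynomial ℤ) HH, ∀ u : W, b u = C u) ∧
      (∀ u : W, d (C u) = C u) ∧
      (∀ u : W, Hb.repr (C u) u = 1) ∧
      (∀ u x : W, x ≠ u → Hb.repr (C u) x ≠ 0 → cs.bruhatLT x u) ∧
      (∀ u x : W, x ≠ u → ∀ n : ℤ, n ≤ 0 → (Hb.repr (C u) x).coeff n = 0) :=
  kazhdan_lusztig_basis_existence_and_uniqueness_general cs HH Hb Hb_one Hb_mul Hb_mul' d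
    d_semilinear d_H
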